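/- arXiv:2504.12534 — 3 statements merged into one kernel-verified Lean document; each statement's English description precedes it below -/
import Mathlib

section
/- The distribution function F of ψ is strictly increasing on [0,1]: for all 0 ≤ s < t ≤ 1 one has F(s) < F(t). (Paper's Lemma 2.2(c)(i).) -/
open Set MeasureTheory Filter
open scoped ENNReal Topology Classical

/-- The setup of Section 2 of the paper: a full-branched Markov linear map `G` on `[0,1]`
with branch domains `I_1,…,I_{k_I}` (mapped affinely onto `[0,1]`) and complementary
intervals `J_j` (mapped affinely onto `(0,1)`), all of length at most `1/2`. -/
structure CantorData where
  kI : ℕ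
  hkI : 1 ≤ kI
  a : ℕ → ℝ
  ha_lt : ∀ i, i + 1 < 2 * kI → a i < a (i + 1)
  ha0 : 0 ≤ a 0
  ha1 : a (2 * kI - 1) ≤ 1
  G : ℝ → ℝ
  hGmaps : Set.MapsTo G (Set.Icc 0 1) (Set.Icc 0 1)
  hGI : ∀ i < kI, ∃ s c : ℝ,
    |s| * (a (2 * i + 1) - a (2 * i)) = 1 ∧
    (∀ x ∈ Set.Icc (a (2 * i)) (a (2 * i + 1)), G x = s * x + c) ∧
    Set.BijOn G (Set.Icc (a (2 * i)) (a (2 * i + 1))) (Set.Icc 0 1)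
  hGJmid : ∀ i, i + 1 < kI → ∃ s c : ℝ,
    |s| * (a (2 * i + 2) - a (2 * i + 1)) = 1 ∧
    (∀ x ∈ Set.Ioo (a (2 * i + 1)) (a (2 * i + 2)), G x = s * x + c) ∧
    Set.SurjOn G (Set.Ioo (a (2 * i + 1)) (a (2 * i + 2))) (Set.Ioo 0 1)
  hGJleft : 0 < a 0 → ∃ s c : ℝ,
    |s| * a 0 = 1 ∧
    (∀ x ∈ Set.Ico 0 (a 0), G x = s * x + c) ∧
    Set.SurjOn G (Set.Ico 0 (a 0)) (Set.Ioo 0 1)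
  hGJright : a (2 * kI - 1) < 1 → ∃ s c : ℝ,
    |s| * (1 - a (2 * kI - 1)) = 1 ∧
    (∀ x ∈ Set.Ioc (a (2 * kI - 1)) 1, G x = s * x + c) ∧
    Set.SurjOn G (Set.Ioc (a (2 * kI - 1)) 1) (Set.Ioo 0 1)
  hIlen : ∀ i < kI, a (2 * i + 1) - a (2 * i) ≤ 1 / 2
  hJlenL : a 0 ≤ 1 / 2
  hJlenR : 1 - a (2 * kI - 1) ≤ 1 / 2
  hJlenM : ∀ i, i + 1 < kI → a (2 * i + 2) - a (2 * i + 1) ≤ 1 / 2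
  hkJ : (Set.Icc (0:ℝ) 1 \ ⋃ i ∈ Finset.range kI,
      Set.Icc (a (2 * i)) (a (2 * i + 1))).Nonempty

namespace CantorData

variable (S : CantorData)

/-- The union `⋃_i I_i` of the branch domains forming the Cantor construction. -/
def IU : Set ℝ := ⋃ i ∈ Finset.range S.kI, Set.Icc (S.a (2 * i)) (S.a (2 * i + 1))

/-- `Λ_n = {x ∈ [0,1] : G^{i-1}(x) ∈ ⋃ I for all 1 ≤ i ≤ n}`. -/
def Lam (n : ℕ) : Set ℝ := {x ∈ Set.Icc (0:ℝ) 1 | ∀ i < n, S.G^[i] x ∈ S.IU}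

/-- The dynamically defined Cantor set `Λ = ⋂_n Λ_n`. -/
def Cantor : Set ℝ := ⋂ n : ℕ, S.Lam n

/-- `λ = |⋃ I_i| = Σ_i 1/m_i`. -/
noncomputable def lam : ℝ := ∑ i ∈ Finset.range S.kI, (S.a (2 * i + 1) - S.a (2 * i))

/-- `𝔪`, Lebesgue measure on `[0,1]`. -/
noncomputable def mes (_S : CantorData) : Measure ℝ := volume.restrict (Set.Icc 0 1)

/-- `ψ(x) = Σ_{i ∈ 𝓘_x} 2^{-i}` where `𝓘_x = {i ≥ 1 : G^{i-1}(x) ∉ ⋃ I}`. -/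
noncomputable def psi (x : ℝ) : ℝ :=
  ∑' i : ℕ, if S.G^[i] x ∈ S.IU then 0 else (2:ℝ)⁻¹ ^ (i + 1)

/-- `F(t) = 𝔪{x : ψ(x) ≤ t}`, the distribution function of `ψ`. -/
noncomputable def F (t : ℝ) : ℝ := (S.mes {x | S.psi x ≤ t}).toReal

/-- `φ_α = (F ∘ ψ)^{-1/α}`, with value `∞` where `F ∘ ψ` vanishes. -/
noncomputable def phi (α : ℝ) (x : ℝ) : ℝ≥0∞ :=
  ENNReal.ofReal (S.F (S.psi x)) ^ (-(1 / α))

/-- `X_n = φ_α ∘ G^n`. -/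
noncomputable def X (α : ℝ) (n : ℕ) (x : ℝ) : ℝ≥0∞ := S.phi α (S.G^[n] x)

/-- `P_n`: the points following the Cantor construction exactly `n` steps and
never entering `⋃ I` afterwards. -/
def Pset (n : ℕ) : Set ℝ :=
  {x ∈ Set.Icc (0:ℝ) 1 | (∀ i < n, S.G^[i] x ∈ S.IU) ∧ ∀ i, n ≤ i → S.G^[i] x ∉ S.IU}

/-- The family of partition intervals `(I,J)_1,…,(I,J)_{k_I+k_J}`. -/
def PieceFamily : Set (Set ℝ) :=
  ((fun i => Set.Icc (S.a (2 * i)) (S.a (2 * i + 1))) '' Set.Iio S.kI) ∪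
  ((fun i => Set.Ioo (S.a (2 * i + 1)) (S.a (2 * i + 2))) '' {i | i + 1 < S.kI}) ∪
  {Set.Ico (0:ℝ) (S.a 0), Set.Ioc (S.a (2 * S.kI - 1)) 1}

/-- The depth-`d` cylinder `C_w = ⋂_{k=1}^d G^{-(k-1)}((I,J)_{w_k})`. -/
def Cyl (d : ℕ) (w : ℕ → Set ℝ) : Set ℝ := ⋂ k ∈ Finset.range d, (S.G^[k]) ⁻¹' (w k)

/-- `C` is a depth-`d` cylinder. -/
def IsCylinder (d : ℕ) (C : Set ℝ) : Prop :=
  ∃ w : ℕ → Set ℝ, (∀ k < d, w k ∈ S.PieceFamily) ∧ C = S.Cyl d w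

/-- `Υ⁺(A,d)`: union of the depth-`d` cylinders meeting `A`. -/
def upApprox (A : Set ℝ) (d : ℕ) : Set ℝ :=
  ⋃₀ {C | S.IsCylinder d C ∧ (C ∩ A).Nonempty}

/-- `Υ⁻(A,d)`: union of the depth-`d` cylinders contained in `A`. -/
def lowApprox (A : Set ℝ) (d : ℕ) : Set ℝ :=
  ⋃₀ {C | S.IsCylinder d C ∧ C ⊆ A}

/-- `u_n(τ) = (n/τ)^{1/α}`. -/
noncomputable def un (_S : CantorData) (α τ : ℝ) (n : ℕ) : ℝ := ((n : ℝ) / τ) ^ (1 / α)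

/-- `U_n(τ) = {X_0 > u_n(τ)}`. -/
noncomputable def Un (α τ : ℝ) (n : ℕ) : Set ℝ :=
  {x ∈ Set.Icc (0:ℝ) 1 | ENNReal.ofReal (S.un α τ n) < S.X α 0 x}

/-- `U_n^{(1)}(τ) = U_n(τ) ∩ G^{-1}([0,1] ∖ U_n(τ))`. -/
noncomputable def Un1 (α τ : ℝ) (n : ℕ) : Set ℝ :=
  S.Un α τ n ∩ S.G ⁻¹' (Set.Icc 0 1 \ S.Un α τ n)

/-- `U_n(τ',τ'') = U_n(τ') ∖ U_n(τ'')`. -/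
noncomputable def UnPair (α τ' τ'' : ℝ) (n : ℕ) : Set ℝ := S.Un α τ' n \ S.Un α τ'' n

/-- `U_n(τ',τ'')^{(1)}`. -/
noncomputable def UnPair1 (α τ' τ'' : ℝ) (n : ℕ) : Set ℝ :=
  S.UnPair α τ' τ'' n ∩ S.G ⁻¹' (Set.Icc 0 1 \ S.UnPair α τ' τ'' n)

/-- `j_{n,τ}`: the least `j` with `λ^j ≤ τ/n`. -/
noncomputable def jn (τ : ℝ) (n : ℕ) : ℕ := sInf {j : ℕ | S.lam ^ j ≤ τ / n}

/-- `Γ_n^+`: outer approximation of `U_n(τ',τ'')^{(1)}` by depth-`2 j_{n,τ'}` cylinders. -/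
noncomputable def GammaPlus (α τ' τ'' : ℝ) (n : ℕ) : Set ℝ :=
  S.upApprox (S.UnPair1 α τ' τ'' n) (2 * S.jn τ' n)

/-- `Γ_n^-`: inner approximation of `U_n(τ',τ'')^{(1)}` by depth-`2 j_{n,τ'}` cylinders. -/
noncomputable def GammaMinus (α τ' τ'' : ℝ) (n : ℕ) : Set ℝ :=
  S.lowApprox (S.UnPair1 α τ' τ'' n) (2 * S.jn τ' n)

end CantorData


/-!
Each branch of `G` is affine onto `(0,1)`, so it pulls sets of positive measure back to sets
of positive measure; by induction every finite itinerary `w ∈ {I, J}ⁿ` is followed by a set of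
positive measure. On that set `ψ` lies in `[d_w, d_w + 2⁻ⁿ]`, where `d_w` is the binary number
`0.w₁⋯wₙ` (digit `1` for `J`). Given `s < t`, choose `n` and `w` with this dyadic interval inside
`(s, t]`: the set then lies in `{ψ ≤ t} \ {ψ ≤ s}`, so `F s < F t`.
-/

lemma tsum_mem_Icc_sum_range_add_half_pow {f : ℕ → ℝ} (h0 : ∀ i, 0 ≤ f i)
    (hf : ∀ i, f i ≤ 2⁻¹ ^ (i + 1)) (n : ℕ) :
    ∑' i, f i ∈ Icc (∑ i ∈ Finset.range n, f i) (∑ i ∈ Finset.range n, f i + 2⁻¹ ^ n) := by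
  have hgeom (i : ℕ) : (2 : ℝ)⁻¹ ^ (i + 1) = 1 / 2 / 2 ^ i := by
    rw [pow_succ, inv_pow]; ring
  have hsum : Summable f :=
    (summable_geometric_two' 1).of_nonneg_of_le h0 fun i => (hf i).trans (hgeom i).le
  refine ⟨hsum.sum_le_tsum _ fun i _ => h0 i, ?_⟩
  rw [← hsum.sum_add_tsum_nat_add n]
  gcongr
  calc ∑' i, f (i + n) ≤ ∑' i : ℕ, 2⁻¹ ^ n / 2 / 2 ^ i := by
        refine ((summable_nat_add_iff n).2 hsum).tsum_le_tsum (fun i => (hf _).trans_eq ?_)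
          (summable_geometric_two' _)
        rw [pow_succ, pow_add, inv_pow, inv_pow]; ring
    _ = 2⁻¹ ^ n := tsum_geometric_two' _

lemma toReal_measure_lt_of_subset_diff {α : Type*} [MeasurableSpace α] {μ : Measure α}
    [IsFiniteMeasure μ] {s t A : Set α} (hst : s ⊆ t) (hA : A ⊆ t \ s) (hAm : MeasurableSet A)
    (hApos : 0 < μ A) : (μ s).toReal < (μ t).toReal := by
  refine ENNReal.toReal_strict_mono (measure_ne_top μ t) ?_
  calc μ s < μ s + μ A := ENNReal.lt_add_right (measure_ne_top μ s) hApos.ne'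
    _ = μ (s ∪ A) := (measure_union (disjoint_sdiff_right.mono_right hA) hAm).symm
    _ ≤ μ t := measure_mono (union_subset hst (hA.trans sdiff_subset))

lemma volume_preimage_affine {m : ℝ} (hm : m ≠ 0) (c : ℝ) (A : Set ℝ) :
    volume ((fun x => m * x + c) ⁻¹' A) = ENNReal.ofReal |m⁻¹| * volume A := by
  rw [show (fun x => m * x + c) ⁻¹' A = (m * ·) ⁻¹' ((· + c) ⁻¹' A) from rfl,
    Real.volume_preimage_mul_left hm, measure_preimage_add_right]

noncomputable def dyadicSum {n : ℕ} (w : Fin n → Bool) : ℝ :=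
  ∑ i, if w i then 2⁻¹ ^ (i.val + 1) else 0

lemma dyadicSum_cons {n : ℕ} (b : Bool) (w : Fin n → Bool) :
    dyadicSum (Fin.cons b w : Fin (n + 1) → Bool) = (if b then 2⁻¹ else 0) + dyadicSum w / 2 := by
  simp only [dyadicSum, Fin.sum_univ_succ, Fin.cons_zero, Fin.cons_succ, Fin.val_zero,
    Fin.val_succ, Finset.sum_div]
  congr 1
  · simp
  · refine Finset.sum_congr rfl fun i _ => ?_
    split_ifs <;> ring

lemma exists_dyadicSum_le_lt : ∀ (n : ℕ) {x : ℝ}, 0 ≤ x → x < 1 →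
    ∃ w : Fin n → Bool, dyadicSum w ≤ x ∧ x < dyadicSum w + 2⁻¹ ^ n
  | 0, _, h0, h1 => ⟨Fin.elim0, by simpa [dyadicSum] using ⟨h0, h1⟩⟩
  | n + 1, x, h0, h1 => by
    by_cases hx : 2⁻¹ ≤ x
    · obtain ⟨w, hw⟩ := exists_dyadicSum_le_lt n (x := 2 * x - 1) (by linarith) (by linarith)
      refine ⟨Fin.cons true w, ?_⟩
      rw [dyadicSum_cons, pow_succ]
      constructor <;> simp only [if_true] <;> linarith [hw.1, hw.2]
    · obtain ⟨w, hw⟩ := exists_dyadicSum_le_lt n (x := 2 * x) (by linarith) (by linarith)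
      refine ⟨Fin.cons false w, ?_⟩
      rw [dyadicSum_cons, pow_succ]
      constructor <;> simp only [Bool.false_eq_true, if_false] <;> linarith [hw.1, hw.2]

namespace CantorData

variable (S : CantorData)

lemma a_strictMonoOn : StrictMonoOn S.a (Iic (2 * S.kI - 1)) :=
  strictMonoOn_Iic_of_lt_succ fun m hm => by
    rw [Order.succ_eq_add_one]
    exact S.ha_lt m (by omega)

lemma a_le_a {i j : ℕ} (hij : i ≤ j) (hj : j ≤ 2 * S.kI - 1) : S.a i ≤ S.a j :=
  S.a_strictMonoOn.monotoneOn (hij.trans hj) hj hij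

lemma a_mem_Icc {i : ℕ} (hi : i ≤ 2 * S.kI - 1) : S.a i ∈ Icc 0 1 :=
  ⟨S.ha0.trans (S.a_le_a (Nat.zero_le i) hi), (S.a_le_a hi le_rfl).trans S.ha1⟩

lemma mem_IU {x : ℝ} : x ∈ S.IU ↔ ∃ i < S.kI, x ∈ Icc (S.a (2 * i)) (S.a (2 * i + 1)) := by
  simp only [IU, Finset.mem_range, mem_iUnion, exists_prop]

def IsAffineBranch (P : Set ℝ) : Prop :=
  P ⊆ Icc 0 1 ∧ SurjOn S.G P (Ioo 0 1) ∧
    ∃ m c : ℝ, m ≠ 0 ∧ EqOn S.G (fun x => m * x + c) P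

lemma isAffineBranch_of_surjOn {P : Set ℝ} {d : ℝ} (hP : P ⊆ Icc 0 1)
    (h : ∃ m c : ℝ, |m| * d = 1 ∧ (∀ x ∈ P, S.G x = m * x + c) ∧ SurjOn S.G P (Ioo 0 1)) :
    S.IsAffineBranch P :=
  let ⟨m, c, hm, hG, hsurj⟩ := h
  ⟨hP, hsurj, m, c, abs_ne_zero.mp (left_ne_zero_of_mul_eq_one hm), hG⟩

lemma exists_isAffineBranch_subset_IU : ∃ P, S.IsAffineBranch P ∧ P ⊆ S.IU := by
  have hkI := S.hkI
  obtain ⟨m, c, hm, hG, hbij⟩ := S.hGI 0 hkI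
  refine ⟨Icc (S.a 0) (S.a 1), S.isAffineBranch_of_surjOn ?_ ⟨m, c, hm, hG, ?_⟩,
    fun x hx => S.mem_IU.2 ⟨0, hkI, hx⟩⟩
  · exact Icc_subset_Icc (S.a_mem_Icc (Nat.zero_le _)).1 (S.a_mem_Icc (by omega)).2
  · exact hbij.surjOn.mono subset_rfl Ioo_subset_Icc_self

lemma exists_isAffineBranch_disjoint_IU : ∃ P, S.IsAffineBranch P ∧ Disjoint P S.IU := by
  have hkI := S.hkI
  by_cases h0 : 0 < S.a 0
  · refine ⟨Ico 0 (S.a 0), S.isAffineBranch_of_surjOn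
      (fun x hx => ⟨hx.1, hx.2.le.trans (S.a_mem_Icc (Nat.zero_le _)).2⟩) (S.hGJleft h0),
      disjoint_left.2 fun x hx hxI => ?_⟩
    obtain ⟨i, hi, hxi⟩ := S.mem_IU.1 hxI
    linarith [hx.2, hxi.1, S.a_le_a (Nat.zero_le (2 * i)) (by omega)]
  by_cases h1 : S.a (2 * S.kI - 1) < 1
  · refine ⟨Ioc (S.a (2 * S.kI - 1)) 1, S.isAffineBranch_of_surjOn
      (fun x hx => ⟨(S.a_mem_Icc le_rfl).1.trans hx.1.le, hx.2⟩) (S.hGJright h1),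
      disjoint_left.2 fun x hx hxI => ?_⟩
    obtain ⟨i, hi, hxi⟩ := S.mem_IU.1 hxI
    linarith [hx.1, hxi.2, S.a_le_a (show 2 * i + 1 ≤ 2 * S.kI - 1 by omega) le_rfl]
  -- The `I_i` now reach both ends of `[0,1]`, so a gap exists only if `k_I ≥ 2`.
  have hkI2 : 2 ≤ S.kI := by
    by_contra hk
    have hk1 : S.kI = 1 := by omega
    obtain ⟨x, hx, hxI⟩ := S.hkJ
    rw [hk1] at h1
    exact hxI (S.mem_IU.2 ⟨0, hkI, by linarith [hx.1], by linarith [hx.2]⟩)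
  refine ⟨Ioo (S.a 1) (S.a 2), S.isAffineBranch_of_surjOn ?_ (S.hGJmid 0 (by omega)),
    disjoint_left.2 fun x hx hxI => ?_⟩
  · exact Ioo_subset_Icc_self.trans
      (Icc_subset_Icc (S.a_mem_Icc (by omega)).1 (S.a_mem_Icc (by omega)).2)
  obtain ⟨i, hi, hxi⟩ := S.mem_IU.1 hxI
  rcases Nat.eq_zero_or_pos i with rfl | hi0
  · linarith [hx.1, hxi.2]
  · linarith [hx.2, hxi.1, S.a_le_a (show 2 ≤ 2 * i by omega) (by omega)]

lemma exists_isAffineBranch (b : Bool) :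
    ∃ P, S.IsAffineBranch P ∧ ∀ x ∈ P, (x ∉ S.IU ↔ b) := by
  cases b
  · obtain ⟨P, hP, hPI⟩ := S.exists_isAffineBranch_subset_IU
    exact ⟨P, hP, fun x hx => by simpa using hPI hx⟩
  · obtain ⟨P, hP, hPJ⟩ := S.exists_isAffineBranch_disjoint_IU
    exact ⟨P, hP, fun x hx => by simpa using hPJ.notMem_of_mem_left hx⟩

variable {S} in
lemma IsAffineBranch.exists_subset_mapsTo {P A : Set ℝ} (hP : S.IsAffineBranch P)
    (hAm : MeasurableSet A) (hA : A ⊆ Icc 0 1) (hApos : 0 < volume A) :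
    ∃ B ⊆ P, MeasurableSet B ∧ 0 < volume B ∧ MapsTo S.G B A := by
  obtain ⟨-, hsurj, m, c, hm, hG⟩ := hP
  set f : ℝ → ℝ := fun x => m * x + c
  have hBP : f ⁻¹' (A ∩ Ioo 0 1) ⊆ P := fun x hx => by
    obtain ⟨y, hyP, hy⟩ := hsurj hx.2
    rw [hG hyP] at hy
    obtain rfl : y = x := mul_left_cancel₀ hm (add_right_cancel hy)
    exact hyP
  refine ⟨f ⁻¹' (A ∩ Ioo 0 1), hBP, (hAm.inter measurableSet_Ioo).preimage (by fun_prop), ?_,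
    fun x hx => by rw [hG (hBP hx)]; exact hx.1⟩
  rw [volume_preimage_affine hm, measure_congr ((ae_eq_refl A).inter Ioo_ae_eq_Icc),
    inter_eq_left.2 hA]
  exact ENNReal.mul_pos (ENNReal.ofReal_pos.2 (abs_pos.2 (inv_ne_zero hm))).ne' hApos.ne'

lemma exists_pos_volume_itinerary_set : ∀ {n : ℕ} (w : Fin n → Bool),
    ∃ A ⊆ Icc 0 1, MeasurableSet A ∧ 0 < volume A ∧ ∀ x ∈ A, ∀ i : Fin n, (S.G^[i] x ∉ S.IU ↔ w i)
  | 0, _ => ⟨Icc 0 1, subset_rfl, measurableSet_Icc, by simp, fun _ _ i => i.elim0⟩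
  | n + 1, w => by
    obtain ⟨A, hA01, hAm, hApos, hA⟩ := exists_pos_volume_itinerary_set (Fin.tail w)
    obtain ⟨P, hP, hPw⟩ := S.exists_isAffineBranch (w 0)
    obtain ⟨B, hBP, hBm, hBpos, hBA⟩ := hP.exists_subset_mapsTo hAm hA01 hApos
    refine ⟨B, hBP.trans hP.1, hBm, hBpos, fun x hx i => ?_⟩
    cases i using Fin.cases with
    | zero => exact hPw x (hBP hx)
    | succ i => exact hA _ (hBA hx) i

lemma psi_mem_Icc_of_itinerary {n : ℕ} {w : Fin n → Bool} {x : ℝ}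
    (hx : ∀ i : Fin n, S.G^[i] x ∉ S.IU ↔ w i) :
    S.psi x ∈ Icc (dyadicSum w) (dyadicSum w + 2⁻¹ ^ n) := by
  set f : ℕ → ℝ := fun i => if S.G^[i] x ∈ S.IU then 0 else 2⁻¹ ^ (i + 1)
  have hf : ∑ i ∈ Finset.range n, f i = dyadicSum w := by
    rw [← Fin.sum_univ_eq_sum_range]
    refine Finset.sum_congr rfl fun i _ => ?_
    by_cases hi : S.G^[i] x ∈ S.IU <;> simp [f, hi, ← hx i]
  rw [← hf]
  refine tsum_mem_Icc_sum_range_add_half_pow (fun i => ?_) (fun i => ?_) n <;>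
    by_cases hi : S.G^[i] x ∈ S.IU <;> simp [f, hi]

end CantorData

/-- the distribution function `F` of `ψ` is strictly increasing on `[0,1]`. -/
theorem F_strictMono (S : CantorData) (s t : ℝ)
    (hs : 0 ≤ s) (hst : s < t) (ht : t ≤ 1) :
    S.F s < S.F t := by
  obtain ⟨n, hn⟩ := exists_pow_lt_of_lt_one (by linarith : 0 < (t - s) / 2)
    (by norm_num : (2 : ℝ)⁻¹ < 1)
  obtain ⟨w, hw_le, hw_lt⟩ :=
    exists_dyadicSum_le_lt n (x := s + 2⁻¹ ^ n) (by positivity) (by linarith)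
  obtain ⟨A, hA01, hAm, hApos, hAw⟩ := S.exists_pos_volume_itinerary_set w
  have hA : A ⊆ {x | S.psi x ≤ t} \ {x | S.psi x ≤ s} := fun x hx => by
    have hψ := S.psi_mem_Icc_of_itinerary (hAw x hx)
    simp only [Set.mem_sdiff, mem_ofPred_eq, not_le]
    constructor <;> linarith [hψ.1, hψ.2]
  unfold CantorData.F CantorData.mes
  refine toReal_measure_lt_of_subset_diff (fun x hx => le_trans hx hst.le) hA hAm ?_
  rwa [Measure.restrict_eq_self _ hA01]
end

section
/- The random variable F∘ψ is uniformly distributed on [0,1]: for every z ∈ [0,1], 𝔪{x ∈ [0,1] : F(ψ(x)) ≤ z} = z; equivalently, the pushforward of 𝔪 under F∘ψ is Lebesgue measure on [0,1]. (Paper's Lemma 2.2(c)(iii).) -/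
open Set MeasureTheory Filter
open scoped ENNReal Topology Classical

/-! The itinerary of `x` records, for each `i`, whether `G^i x` lies in `⋃ I_i`, and `ψ` reads
it as a binary expansion. Since every branch of `G` is affine and onto, the points whose
itinerary has a prescribed prefix of length `n` have measure at most `max(λ, 1 - λ)^n`, while
a level set `{ψ = t}` realises at most two prefixes of each length (two binary expansions of
the same number differ only by a carry). So the law of `ψ` has no atoms, its distribution
function `F` is continuous, and `F ∘ ψ` is uniform by the probability integral transform. -/

open ProbabilityTheory

namespace ProbabilityTheory

variable {ν : Measure ℝ} [IsProbabilityMeasure ν] [NullSingletonClass ν]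

lemma continuous_cdf : Continuous (cdf ν) := by
  refine continuous_iff_continuousAt.2 fun x => ?_
  rw [(monotone_cdf ν).continuousAt_iff_leftLim_eq_rightLim, (cdf ν).rightLim_eq]
  have h := (cdf ν).measure_singleton x
  rw [measure_cdf, measure_singleton, eq_comm, ENNReal.ofReal_eq_zero, sub_nonpos] at h
  exact le_antisymm ((monotone_cdf ν).leftLim_le le_rfl) h

lemma measure_setOf_cdf_le_le_ofReal (z : ℝ) : ν {x | cdf ν x ≤ z} ≤ ENNReal.ofReal z := by
  rcases le_or_gt 1 z with hz | hz
  · exact prob_le_one.trans (ENNReal.one_le_ofReal.2 hz)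
  set s := {x | cdf ν x ≤ z}
  rcases s.eq_empty_or_nonempty with hs | hs
  · simp [hs]
  obtain ⟨b, hb⟩ := ((tendsto_cdf_atTop ν).eventually (lt_mem_nhds hz)).exists
  have hbdd : BddAbove s := ⟨b, fun x hx => le_of_not_gt fun hbx =>
    (hb.trans_le ((monotone_cdf ν) hbx.le)).not_ge hx⟩
  have hmem : sSup s ∈ s := (isClosed_le continuous_cdf continuous_const).csSup_mem hs hbdd
  calc ν s ≤ ν (Iic (sSup s)) := measure_mono fun x hx => le_csSup hbdd hx
    _ = ENNReal.ofReal (cdf ν (sSup s)) := (ofReal_cdf ν _).symm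
    _ ≤ ENNReal.ofReal z := ENNReal.ofReal_le_ofReal hmem

lemma ofReal_le_measure_setOf_cdf_le {z : ℝ} (hz : z ≤ 1) :
    ENNReal.ofReal z ≤ ν {x | cdf ν x ≤ z} := by
  rcases le_or_gt z 0 with h0 | h0
  · simp [ENNReal.ofReal_of_nonpos h0]
  rcases hz.lt_or_eq with h1 | rfl
  · obtain ⟨a, ha⟩ := ((tendsto_cdf_atBot ν).eventually (gt_mem_nhds h0)).exists
    obtain ⟨b, hb⟩ := ((tendsto_cdf_atTop ν).eventually (lt_mem_nhds h1)).exists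
    obtain ⟨t, rfl⟩ := intermediate_value_univ a b continuous_cdf ⟨ha.le, hb.le⟩
    rw [ofReal_cdf]
    exact measure_mono fun x hx => monotone_cdf ν hx
  · simp [cdf_le_one]

lemma measure_setOf_cdf_le {z : ℝ} (hz : z ≤ 1) : ν {x | cdf ν x ≤ z} = ENNReal.ofReal z :=
  (measure_setOf_cdf_le_le_ofReal z).antisymm (ofReal_le_measure_setOf_cdf_le hz)

lemma map_cdf_eq_restrict_Icc : ν.map (cdf ν) = volume.restrict (Icc 0 1) := by
  have hm : Measurable (cdf ν) := (monotone_cdf ν).measurable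
  refine Measure.ext_of_Iic _ _ fun z => ?_
  have h1 : cdf ν ⁻¹' Iic z = {x | cdf ν x ≤ min z 1} := by
    ext x; simp [cdf_le_one]
  have h2 : Iic z ∩ Icc 0 1 = Icc 0 (min z 1) := by
    ext x; simp only [mem_inter_iff, mem_Iic, mem_Icc, le_min_iff]; tauto
  rw [Measure.map_apply hm measurableSet_Iic, Measure.restrict_apply measurableSet_Iic, h1, h2,
    measure_setOf_cdf_le (min_le_right _ _), Real.volume_Icc, sub_zero]

end ProbabilityTheory

/-- With `Z i := G^i x ∈ ⋃ I`, the series `∑' i, binTerm Z i` is `ψ x`. -/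
noncomputable def binTerm (Z : ℕ → Prop) (i : ℕ) : ℝ := if Z i then 0 else (2:ℝ)⁻¹ ^ (i + 1)

lemma binTerm_nonneg (Z : ℕ → Prop) (i : ℕ) : 0 ≤ binTerm Z i := by
  unfold binTerm; split_ifs <;> positivity

lemma binTerm_le (Z : ℕ → Prop) (i : ℕ) : binTerm Z i ≤ (2:ℝ)⁻¹ ^ (i + 1) := by
  unfold binTerm; split_ifs <;> simp

lemma binTerm_congr {Z Z' : ℕ → Prop} {i : ℕ} (h : Z i ↔ Z' i) : binTerm Z i = binTerm Z' i := by
  simp only [binTerm, h]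

lemma abs_binTerm_sub_of_not_iff {Z Z' : ℕ → Prop} {i : ℕ} (h : ¬(Z i ↔ Z' i)) :
    |binTerm Z i - binTerm Z' i| = (2:ℝ)⁻¹ ^ (i + 1) := by
  by_cases hZ : Z i <;> simp_all [binTerm]

lemma summable_binTerm (Z : ℕ → Prop) : Summable (binTerm Z) :=
  ((summable_geometric_of_lt_one (r := (2:ℝ)⁻¹) (by norm_num) (by norm_num)).mul_left
    (2:ℝ)⁻¹).of_nonneg_of_le (binTerm_nonneg Z) fun i => (binTerm_le Z i).trans_eq (pow_succ' _ _)

lemma sum_range_binTerm_le_tsum (Z : ℕ → Prop) (n : ℕ) :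
    ∑ i ∈ Finset.range n, binTerm Z i ≤ ∑' i, binTerm Z i :=
  (summable_binTerm Z).sum_le_tsum _ fun i _ => binTerm_nonneg Z i

lemma tsum_binTerm_le (Z : ℕ → Prop) (n : ℕ) :
    ∑' i, binTerm Z i ≤ ∑ i ∈ Finset.range n, binTerm Z i + (2:ℝ)⁻¹ ^ n := by
  rw [← (summable_binTerm Z).sum_add_tsum_nat_add n]
  gcongr
  have hgeom : ∑' i : ℕ, (2:ℝ)⁻¹ ^ (n + 1) * (2:ℝ)⁻¹ ^ i = (2:ℝ)⁻¹ ^ n := by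
    rw [tsum_mul_left, tsum_geometric_inv_two, pow_succ]; ring
  rw [← hgeom]
  exact ((summable_binTerm Z).comp_injective (add_left_injective n)).tsum_le_tsum
    (fun i => (binTerm_le Z (i + n)).trans_eq (by ring))
    ((summable_geometric_of_lt_one (by norm_num) (by norm_num)).mul_left _)

lemma le_abs_sum_range_binTerm_sub {Z Z' : ℕ → Prop} :
    ∀ n, ¬(∀ i < n, Z i ↔ Z' i) →
      (2:ℝ)⁻¹ ^ n ≤ |∑ i ∈ Finset.range n, binTerm Z i - ∑ i ∈ Finset.range n, binTerm Z' i|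
  | 0, hdiff => (hdiff fun _ hi => absurd hi (Nat.not_lt_zero _)).elim
  | n + 1, hdiff => by
    rw [Finset.sum_range_succ, Finset.sum_range_succ, add_sub_add_comm]
    by_cases hbefore : ∀ i < n, Z i ↔ Z' i
    · have hn : ¬(Z n ↔ Z' n) := fun hn =>
        hdiff fun i hi => (Nat.lt_succ_iff_lt_or_eq.1 hi).elim (hbefore i) fun h => h ▸ hn
      rw [Finset.sum_congr rfl fun j hj => binTerm_congr (hbefore j (Finset.mem_range.1 hj)),
        sub_self, zero_add, abs_binTerm_sub_of_not_iff hn]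
    · have ih := le_abs_sum_range_binTerm_sub n hbefore
      have hlast : |binTerm Z n - binTerm Z' n| ≤ (2:ℝ)⁻¹ ^ (n + 1) :=
        abs_sub_le_of_nonneg_of_le (binTerm_nonneg Z n) (binTerm_le Z n)
          (binTerm_nonneg Z' n) (binTerm_le Z' n)
      calc (2:ℝ)⁻¹ ^ (n + 1) = (2:ℝ)⁻¹ ^ n - (2:ℝ)⁻¹ ^ (n + 1) := by ring
        _ ≤ _ := sub_le_sub ih hlast
        _ ≤ _ := abs_sub_abs_le_abs_add _ _

lemma exists_two_prefixes_of_tsum_binTerm_eq (T : Set (ℕ → Prop)) {t : ℝ}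
    (hT : ∀ Z ∈ T, ∑' i, binTerm Z i = t) (n : ℕ) :
    ∃ Z₀ Z₁ : ℕ → Prop, ∀ Z ∈ T, (∀ i < n, Z i ↔ Z₀ i) ∨ (∀ i < n, Z i ↔ Z₁ i) := by
  by_cases hsplit : ∃ Z₀ ∈ T, ∃ Z₁ ∈ T, ¬(∀ i < n, Z₀ i ↔ Z₁ i)
  · obtain ⟨Z₀, h₀, Z₁, h₁, h₀₁⟩ := hsplit
    refine ⟨Z₀, Z₁, fun Z hZ => or_iff_not_imp_left.2 fun hZ₀ => by_contra fun hZ₁ => ?_⟩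
    have hbounds : ∀ W ∈ T, t - (2:ℝ)⁻¹ ^ n ≤ ∑ i ∈ Finset.range n, binTerm W i ∧
        ∑ i ∈ Finset.range n, binTerm W i ≤ t := fun W hW =>
      hT W hW ▸ ⟨by linarith [tsum_binTerm_le W n], sum_range_binTerm_le_tsum W n⟩
    obtain ⟨hb, hb'⟩ := hbounds Z hZ
    obtain ⟨hb₀, hb₀'⟩ := hbounds Z₀ h₀
    obtain ⟨hb₁, hb₁'⟩ := hbounds Z₁ h₁
    have hpos : (0:ℝ) < (2:ℝ)⁻¹ ^ n := by positivity
    have d₀ := le_abs_sum_range_binTerm_sub n hZ₀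
    have d₁ := le_abs_sum_range_binTerm_sub n hZ₁
    have d₀₁ := le_abs_sum_range_binTerm_sub n h₀₁
    rw [le_abs] at d₀ d₁ d₀₁
    rcases d₀ with d₀ | d₀ <;> rcases d₁ with d₁ | d₁ <;> rcases d₀₁ with d₀₁ | d₀₁ <;> linarith
  · push Not at hsplit
    rcases T.eq_empty_or_nonempty with rfl | ⟨Z₀, h₀⟩
    · exact ⟨fun _ => True, fun _ => True, by simp⟩
    · exact ⟨Z₀, Z₀, fun Z hZ => Or.inl (hsplit Z hZ Z₀ h₀)⟩

section AffineBranch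

variable {G : ℝ → ℝ} {P : Set ℝ} {s c L : ℝ}

lemma volume_inter_preimage_le_of_affine (hsL : |s| * L = 1) (hG : ∀ x ∈ P, G x = s * x + c)
    (A : Set ℝ) : volume (P ∩ G ⁻¹' A) ≤ ENNReal.ofReal L * volume A := by
  have hs : s ≠ 0 := by rintro rfl; simp at hsL
  have hL : |s⁻¹| = L := by rw [abs_inv, inv_eq_of_mul_eq_one_right hsL]
  rw [Set.EqOn.inter_preimage_eq hG]
  calc volume (P ∩ (fun x => s * x + c) ⁻¹' A)
      ≤ volume ((s * ·) ⁻¹' ((· + c) ⁻¹' A)) := measure_mono inter_subset_right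
    _ = ENNReal.ofReal L * volume A := by
      rw [Real.volume_preimage_mul_left hs, measure_preimage_add_right, hL]

lemma measurableSet_inter_preimage_of_affine (hP : MeasurableSet P)
    (hG : ∀ x ∈ P, G x = s * x + c) {A : Set ℝ} (hA : MeasurableSet A) :
    MeasurableSet (P ∩ G ⁻¹' A) := by
  rw [Set.EqOn.inter_preimage_eq hG]
  exact hP.inter (((measurable_id.const_mul s).add_const c) hA)

end AffineBranch

lemma measure_biUnion_inter_le {α ι : Type*} [MeasurableSpace α] {μ : Measure α}
    (I : Finset ι) (P : ι → Set α) (B : Set α) (L : ι → ℝ) (hL : ∀ i ∈ I, 0 ≤ L i) (m : ℝ≥0∞)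
    (h : ∀ i ∈ I, μ (P i ∩ B) ≤ ENNReal.ofReal (L i) * m) :
    μ ((⋃ i ∈ I, P i) ∩ B) ≤ ENNReal.ofReal (∑ i ∈ I, L i) * m := by
  rw [iUnion₂_inter, ENNReal.ofReal_sum_of_nonneg hL, Finset.sum_mul]
  exact (measure_biUnion_finset_le _ _).trans (Finset.sum_le_sum h)

lemma sum_range_succ_sub_even_add_sum_range_sub_odd (a : ℕ → ℝ) (k : ℕ) :
    ∑ i ∈ Finset.range (k + 1), (a (2 * i + 1) - a (2 * i)) +
      ∑ i ∈ Finset.range k, (a (2 * i + 2) - a (2 * i + 1)) = a (2 * k + 1) - a 0 := by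
  induction k with
  | zero => simp
  | succ k ih =>
    rw [Finset.sum_range_succ _ (k + 1),
      Finset.sum_range_succ (fun i => a (2 * i + 2) - a (2 * i + 1)) k,
      show 2 * (k + 1) = 2 * k + 2 by ring]
    linarith

namespace CantorData

variable (S : CantorData)

/-- `⋃ J_j`; the two outer intervals are empty when `a 0 = 0`, resp. `a (2 kI - 1) = 1`. -/
def JU : Set ℝ :=
  Ico 0 (S.a 0) ∪ (⋃ i ∈ Finset.range (S.kI - 1), Ioo (S.a (2 * i + 1)) (S.a (2 * i + 2))) ∪
    Ioc (S.a (2 * S.kI - 1)) 1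

lemma Icc_diff_IU_subset_JU : Icc 0 1 \ S.IU ⊆ S.JU := by
  rintro x ⟨⟨hx0, hx1⟩, hxI⟩
  simp only [IU, mem_iUnion, Finset.mem_range, mem_Icc, exists_prop, not_exists, not_and]
    at hxI
  simp only [JU, mem_union, mem_Ico, mem_Ioc, mem_iUnion, Finset.mem_range, mem_Ioo, exists_prop]
  rcases lt_or_ge x (S.a 0) with hL | hL
  · exact Or.inl (Or.inl ⟨hx0, hL⟩)
  rcases lt_or_ge (S.a (2 * S.kI - 1)) x with hR | hR
  · exact Or.inr ⟨hR, hx1⟩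
  have hkI := S.hkI
  set j := Nat.findGreatest (fun j => S.a j ≤ x) (2 * S.kI - 1)
  have hj : S.a j ≤ x := Nat.findGreatest_spec (P := fun j => S.a j ≤ x) (Nat.zero_le _) hL
  have hjle : j ≤ 2 * S.kI - 1 := Nat.findGreatest_le _
  have hnext : j < 2 * S.kI - 1 → x < S.a (j + 1) := fun h =>
    lt_of_not_ge (Nat.findGreatest_is_greatest (Nat.lt_succ_self j) h)
  obtain ⟨i, hi | hi⟩ := Nat.even_or_odd' j
  · rw [hi] at hj hnext
    exact absurd (hnext (by omega)).le (hxI i (by omega) hj)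
  · rw [hi] at hj hnext hjle
    have hne : x ≠ S.a (2 * i + 1) := fun h =>
      hxI i (by omega) ((S.ha_lt _ (by omega)).le.trans h.ge) h.le
    have hlt : 2 * i + 1 < 2 * S.kI - 1 := lt_of_le_of_ne hjle fun h =>
      hne (le_antisymm (h ▸ hR) hj)
    exact Or.inl (Or.inr ⟨i, by omega, lt_of_le_of_ne hj hne.symm, hnext hlt⟩)

lemma sum_lengths_J_eq_one_sub_lam :
    S.a 0 + ∑ i ∈ Finset.range (S.kI - 1), (S.a (2 * i + 2) - S.a (2 * i + 1)) +
      (1 - S.a (2 * S.kI - 1)) = 1 - S.lam := by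
  obtain ⟨k, hk⟩ : ∃ k, S.kI = k + 1 := ⟨S.kI - 1, by have := S.hkI; omega⟩
  have := sum_range_succ_sub_even_add_sum_range_sub_odd S.a k
  rw [lam, hk, show 2 * (k + 1) - 1 = 2 * k + 1 by omega, Nat.add_sub_cancel]
  linarith

lemma length_J_nonneg {i : ℕ} (hi : i ∈ Finset.range (S.kI - 1)) :
    0 ≤ S.a (2 * i + 2) - S.a (2 * i + 1) :=
  (sub_pos.2 (S.ha_lt _ (by simp only [Finset.mem_range] at hi; omega))).le

lemma length_I_pos {i : ℕ} (hi : i ∈ Finset.range S.kI) : 0 < S.a (2 * i + 1) - S.a (2 * i) :=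
  sub_pos.2 (S.ha_lt _ (by simp only [Finset.mem_range] at hi; omega))

lemma lam_pos : 0 < S.lam :=
  Finset.sum_pos (fun _ => S.length_I_pos) (Finset.nonempty_range_iff.2 (by have := S.hkI; omega))

lemma lam_lt_one : S.lam < 1 := by
  obtain ⟨x, hx⟩ := S.hkJ
  have hJ := S.sum_lengths_J_eq_one_sub_lam
  have hsum := Finset.sum_nonneg fun i (hi : i ∈ Finset.range (S.kI - 1)) => S.length_J_nonneg hi
  have ha0 := S.ha0
  have ha1 := S.ha1
  rcases S.Icc_diff_IU_subset_JU hx with (⟨h0, h1⟩ | hM) | ⟨h0, h1⟩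
  · linarith
  · simp only [mem_iUnion, mem_Ioo, exists_prop] at hM
    obtain ⟨i, hi, h1, h2⟩ := hM
    linarith [Finset.single_le_sum (fun j hj => S.length_J_nonneg hj) hi]
  · linarith

lemma volume_IU_inter_preimage_le (A : Set ℝ) :
    volume (S.IU ∩ S.G ⁻¹' A) ≤ ENNReal.ofReal S.lam * volume A :=
  measure_biUnion_inter_le _ _ _ _ (fun _ hi => (S.length_I_pos hi).le) _ fun i hi => by
    obtain ⟨s, c, hsL, hG, -⟩ := S.hGI i (Finset.mem_range.1 hi)
    exact volume_inter_preimage_le_of_affine hsL hG A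

lemma volume_JU_inter_preimage_le (A : Set ℝ) :
    volume (S.JU ∩ S.G ⁻¹' A) ≤ ENNReal.ofReal (1 - S.lam) * volume A := by
  have hL : volume (Ico 0 (S.a 0) ∩ S.G ⁻¹' A) ≤ ENNReal.ofReal (S.a 0) * volume A := by
    rcases S.ha0.eq_or_lt with h0 | h0
    · simp [← h0]
    · obtain ⟨s, c, hsL, hG, -⟩ := S.hGJleft h0
      exact volume_inter_preimage_le_of_affine hsL hG A
  have hM := measure_biUnion_inter_le (μ := volume) (Finset.range (S.kI - 1))
    (fun i => Ioo (S.a (2 * i + 1)) (S.a (2 * i + 2))) (S.G ⁻¹' A) _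
    (fun _ hi => S.length_J_nonneg hi) (volume A) fun i hi => by
      obtain ⟨s, c, hsL, hG, -⟩ := S.hGJmid i (by simp only [Finset.mem_range] at hi; omega)
      exact volume_inter_preimage_le_of_affine hsL hG A
  have hR : volume (Ioc (S.a (2 * S.kI - 1)) 1 ∩ S.G ⁻¹' A) ≤
      ENNReal.ofReal (1 - S.a (2 * S.kI - 1)) * volume A := by
    rcases S.ha1.eq_or_lt with h1 | h1
    · simp [h1]
    · obtain ⟨s, c, hsL, hG, -⟩ := S.hGJright h1
      exact volume_inter_preimage_le_of_affine hsL hG A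
  have hsum := Finset.sum_nonneg fun i (hi : i ∈ Finset.range (S.kI - 1)) => S.length_J_nonneg hi
  rw [← S.sum_lengths_J_eq_one_sub_lam,
    ENNReal.ofReal_add (by linarith [S.ha0]) (by linarith [S.ha1]),
    ENNReal.ofReal_add S.ha0 hsum, add_mul, add_mul, JU, union_inter_distrib_right,
    union_inter_distrib_right]
  exact (measure_union_le _ _).trans
    (add_le_add ((measure_union_le _ _).trans (add_le_add hL hM)) hR)

lemma measurableSet_IU : MeasurableSet S.IU :=
  Finset.measurableSet_biUnion _ fun _ _ => measurableSet_Icc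

lemma measurableSet_IU_inter_preimage {A : Set ℝ} (hA : MeasurableSet A) :
    MeasurableSet (S.IU ∩ S.G ⁻¹' A) := by
  rw [IU, iUnion₂_inter]
  exact Finset.measurableSet_biUnion _ fun i hi => by
    obtain ⟨s, c, -, hG, -⟩ := S.hGI i (Finset.mem_range.1 hi)
    exact measurableSet_inter_preimage_of_affine measurableSet_Icc hG hA

lemma measurableSet_JU_inter_preimage {A : Set ℝ} (hA : MeasurableSet A) :
    MeasurableSet (S.JU ∩ S.G ⁻¹' A) := by
  rw [JU, union_inter_distrib_right, union_inter_distrib_right, iUnion₂_inter]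
  refine (MeasurableSet.union ?_ (Finset.measurableSet_biUnion _ fun i hi => ?_)).union ?_
  · rcases S.ha0.eq_or_lt with h0 | h0
    · simp [← h0]
    · obtain ⟨s, c, -, hG, -⟩ := S.hGJleft h0
      exact measurableSet_inter_preimage_of_affine measurableSet_Ico hG hA
  · obtain ⟨s, c, -, hG, -⟩ := S.hGJmid i (by simp only [Finset.mem_range] at hi; omega)
    exact measurableSet_inter_preimage_of_affine measurableSet_Ioo hG hA
  · rcases S.ha1.eq_or_lt with h1 | h1
    · simp [h1]
    · obtain ⟨s, c, -, hG, -⟩ := S.hGJright h1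
      exact measurableSet_inter_preimage_of_affine measurableSet_Ioc hG hA

lemma measurableSet_Icc_inter_preimage {A : Set ℝ} (hA : MeasurableSet A) :
    MeasurableSet (Icc 0 1 ∩ S.G ⁻¹' A) := by
  have hcover : Icc 0 1 ⊆ S.IU ∪ S.JU := fun x hx =>
    (em (x ∈ S.IU)).imp_right fun h => S.Icc_diff_IU_subset_JU ⟨hx, h⟩
  rw [← inter_eq_left.2 hcover, inter_assoc, union_inter_distrib_right]
  exact measurableSet_Icc.inter
    ((S.measurableSet_IU_inter_preimage hA).union (S.measurableSet_JU_inter_preimage hA))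

lemma measurableSet_Icc_inter_preimage_iterate {A : Set ℝ} (hA : MeasurableSet A) (n : ℕ) :
    MeasurableSet (Icc 0 1 ∩ S.G^[n] ⁻¹' A) := by
  induction n with
  | zero => exact measurableSet_Icc.inter hA
  | succ n ih =>
    convert S.measurableSet_Icc_inter_preimage ih using 1
    ext x
    simp only [mem_inter_iff, mem_preimage, Function.iterate_succ_apply]
    exact ⟨fun ⟨hx, h⟩ => ⟨hx, S.hGmaps hx, h⟩, fun ⟨hx, _, h⟩ => ⟨hx, h⟩⟩

def itinerarySet (Z : ℕ → Prop) (n : ℕ) : Set ℝ :=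
  {x ∈ Icc 0 1 | ∀ i < n, (S.G^[i] x ∈ S.IU ↔ Z i)}

lemma itinerarySet_succ_subset (Z : ℕ → Prop) (n : ℕ) :
    S.itinerarySet Z (n + 1) ⊆
      (if Z 0 then S.IU else S.JU) ∩ S.G ⁻¹' S.itinerarySet (fun i => Z (i + 1)) n := by
  rintro x ⟨hx, hZ⟩
  refine ⟨?_, S.hGmaps hx, fun i hi => ?_⟩
  · have h0 := hZ 0 n.succ_pos
    split_ifs with h
    · exact h0.2 h
    · exact S.Icc_diff_IU_subset_JU ⟨hx, fun hI => h (h0.1 hI)⟩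
  · rw [← Function.iterate_succ_apply]
    exact hZ (i + 1) (by omega)

lemma volume_itinerarySet_le (Z : ℕ → Prop) (n : ℕ) :
    volume (S.itinerarySet Z n) ≤ ENNReal.ofReal (max S.lam (1 - S.lam) ^ n) := by
  set q := max S.lam (1 - S.lam)
  induction n generalizing Z with
  | zero => simpa using measure_mono (μ := volume) fun x (hx : x ∈ S.itinerarySet Z 0) => hx.1
  | succ n ih =>
    have hstep : ∀ B, volume ((if Z 0 then S.IU else S.JU) ∩ S.G ⁻¹' B) ≤
        ENNReal.ofReal q * volume B := fun B => by
      split_ifs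
      · exact (S.volume_IU_inter_preimage_le B).trans (by gcongr; exact le_max_left _ _)
      · exact (S.volume_JU_inter_preimage_le B).trans (by gcongr; exact le_max_right _ _)
    calc volume (S.itinerarySet Z (n + 1))
        ≤ ENNReal.ofReal q * volume (S.itinerarySet (fun i => Z (i + 1)) n) :=
          (measure_mono (S.itinerarySet_succ_subset Z n)).trans (hstep _)
      _ ≤ ENNReal.ofReal q * ENNReal.ofReal (q ^ n) := by gcongr; exact ih _
      _ = ENNReal.ofReal (q ^ (n + 1)) := by
          rw [← ENNReal.ofReal_mul (le_max_of_le_left S.lam_pos.le), pow_succ']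

lemma mes_psi_preimage_singleton (t : ℝ) : S.mes (S.psi ⁻¹' {t}) = 0 := by
  set q := max S.lam (1 - S.lam)
  have hq : q < 1 := max_lt S.lam_lt_one (by linarith [S.lam_pos])
  have hbound : ∀ n, S.mes (S.psi ⁻¹' {t}) ≤ 2 * ENNReal.ofReal (q ^ n) := fun n => by
    obtain ⟨Z₀, Z₁, hZ⟩ := exists_two_prefixes_of_tsum_binTerm_eq
      ((fun x i => S.G^[i] x ∈ S.IU) '' (S.psi ⁻¹' {t})) (by rintro _ ⟨x, hx, rfl⟩; exact hx) n
    calc S.mes (S.psi ⁻¹' {t}) = volume (S.psi ⁻¹' {t} ∩ Icc 0 1) :=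
          Measure.restrict_apply' measurableSet_Icc
      _ ≤ volume (S.itinerarySet Z₀ n ∪ S.itinerarySet Z₁ n) := measure_mono fun x ⟨hx, hx01⟩ =>
          (hZ _ ⟨x, hx, rfl⟩).imp (fun h => ⟨hx01, h⟩) fun h => ⟨hx01, h⟩
      _ ≤ 2 * ENNReal.ofReal (q ^ n) := (measure_union_le _ _).trans <| by
          rw [two_mul]
          exact add_le_add (S.volume_itinerarySet_le _ _) (S.volume_itinerarySet_le _ _)
  have hlim : Tendsto (fun n => 2 * ENNReal.ofReal (q ^ n)) atTop (𝓝 0) := by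
    simpa using ENNReal.Tendsto.const_mul (ENNReal.tendsto_ofReal
      (tendsto_pow_atTop_nhds_zero_of_lt_one (le_max_of_le_left S.lam_pos.le) hq))
      (Or.inr ENNReal.ofNat_ne_top)
  exact nonpos_iff_eq_zero.1 (ge_of_tendsto' hlim hbound)

lemma aemeasurable_psi : AEMeasurable S.psi S.mes := by
  show AEMeasurable (fun x => ∑' i, binTerm (fun i => S.G^[i] x ∈ S.IU) i) S.mes
  refine AEMeasurable.tsum fun i => ?_
  set E := Icc 0 1 ∩ S.G^[i] ⁻¹' S.IU
  have hE : MeasurableSet E := S.measurableSet_Icc_inter_preimage_iterate S.measurableSet_IU i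
  refine (measurable_const.indicator hE.compl
    (f := fun _ => (2:ℝ)⁻¹ ^ (i + 1))).aemeasurable.congr ?_
  filter_upwards [ae_restrict_mem measurableSet_Icc] with x hx
  by_cases h : S.G^[i] x ∈ S.IU <;> simp [E, binTerm, h, hx]

instance isProbabilityMeasure_mes : IsProbabilityMeasure S.mes := ⟨by simp [mes]⟩

instance isProbabilityMeasure_map_psi : IsProbabilityMeasure (S.mes.map S.psi) :=
  Measure.isProbabilityMeasure_map S.aemeasurable_psi

instance nullSingletonClass_map_psi : NullSingletonClass (S.mes.map S.psi) :=
  ⟨fun t => by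
    rw [Measure.map_apply_of_aemeasurable S.aemeasurable_psi (measurableSet_singleton t)]
    exact S.mes_psi_preimage_singleton t⟩

lemma F_eq_cdf : S.F = cdf (S.mes.map S.psi) := by
  funext t
  rw [cdf_eq_real, measureReal_def,
    Measure.map_apply_of_aemeasurable S.aemeasurable_psi measurableSet_Iic]
  rfl

end CantorData

/-- `F ∘ ψ` is uniformly distributed on `[0,1]`:
`𝔪{F(ψ(x)) ≤ z} = z` for all `z ∈ [0,1]`; equivalently, the pushforward of `𝔪`
under `F ∘ ψ` is Lebesgue measure on `[0,1]`. -/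
theorem F_psi_uniform (S : CantorData) :
    (∀ z ∈ Set.Icc (0:ℝ) 1,
        S.mes {x | S.F (S.psi x) ≤ z} = ENNReal.ofReal z) ∧
    Measure.map (fun x => S.F (S.psi x)) S.mes = volume.restrict (Set.Icc 0 1) := by
  have hψ := S.aemeasurable_psi
  have hcdf : Measurable (cdf (S.mes.map S.psi)) := (monotone_cdf _).measurable
  rw [S.F_eq_cdf]
  refine ⟨fun z hz => ?_, ?_⟩
  · rw [← measure_setOf_cdf_le (ν := S.mes.map S.psi) hz.2]
    exact (Measure.map_apply_of_aemeasurable hψ (hcdf measurableSet_Iic)).symm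
  · rw [← map_cdf_eq_restrict_Icc (ν := S.mes.map S.psi),
      AEMeasurable.map_map_of_aemeasurable hcdf.aemeasurable hψ]
    rfl
end

section
/- Let u > 1, let j ≥ 1 be an integer, and write U = {x ∈ [0,1] : φ_α(x) > u}. If Λ_j ⊆ U ⊆ Λ_{j−1}, then for every integer q with 1 ≤ q ≤ j−1 one has U ∩ ⋂_{k=1}^{q} G^{−k}([0,1] ∖ U) = U ∩ G^{−1}([0,1] ∖ U); that is, U^{(q)} = U^{(1)} for all such q, so the cluster run length can be taken q_n = 1. (The observation following equation (4.4) of the paper.) -/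
open Set MeasureTheory Filter
open scoped ENNReal Topology Classical

/-- if `Λ_j ⊆ U ⊆ Λ_{j-1}` for `U = {x ∈ [0,1] : φ_α(x) > u}`, then
for every `1 ≤ q ≤ j-1`, `U^{(q)} = U^{(1)}`. -/
theorem Uq_eq_U1 (S : CantorData) (α : ℝ) (hα : α ∈ Set.Ioo (0:ℝ) 2)
    (u : ℝ) (hu : 1 < u) (j : ℕ) (hj : 1 ≤ j)
    (hU1 : S.Lam j ⊆ {x ∈ Set.Icc (0:ℝ) 1 | ENNReal.ofReal u < S.phi α x})
    (hU2 : {x ∈ Set.Icc (0:ℝ) 1 | ENNReal.ofReal u < S.phi α x} ⊆ S.Lam (j - 1))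
    (q : ℕ) (hq1 : 1 ≤ q) (hq2 : q ≤ j - 1) :
    {x ∈ Set.Icc (0:ℝ) 1 | ENNReal.ofReal u < S.phi α x} ∩
      ⋂ k ∈ Finset.Icc 1 q, (S.G^[k]) ⁻¹'
        (Set.Icc 0 1 \ {x ∈ Set.Icc (0:ℝ) 1 | ENNReal.ofReal u < S.phi α x}) =
    {x ∈ Set.Icc (0:ℝ) 1 | ENNReal.ofReal u < S.phi α x} ∩
      S.G ⁻¹' (Set.Icc 0 1 \ {x ∈ Set.Icc (0:ℝ) 1 | ENNReal.ofReal u < S.phi α x}) := by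
  set U := {x ∈ Set.Icc (0:ℝ) 1 | ENNReal.ofReal u < S.phi α x} with hUdef
  ext x
  simp only [Set.mem_inter_iff, Set.mem_iInter, Set.mem_preimage]
  constructor
  · rintro ⟨hxU, hall⟩
    refine ⟨hxU, ?_⟩
    have := hall 1 (by simp [Finset.mem_Icc, hq1])
    simpa using this
  · rintro ⟨hxU, h1⟩
    refine ⟨hxU, ?_⟩
    intro k hk
    rw [Finset.mem_Icc] at hk
    have hx01 : x ∈ Set.Icc (0:ℝ) 1 := hxU.1
    have hiter : ∀ m, S.G^[m] x ∈ Set.Icc (0:ℝ) 1 := fun m =>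
      S.hGmaps.iterate m hx01
    refine ⟨hiter k, ?_⟩
    intro hkU
    rcases eq_or_lt_of_le hk.1 with h1k | h2k
    · apply h1.2
      rw [← h1k] at hkU
      simpa using hkU
    · have hk2 : 2 ≤ k := h2k
      have hxL : x ∈ S.Lam (j - 1) := hU2 hxU
      have hkL : S.G^[k] x ∈ S.Lam (j - 1) := hU2 hkU
      have hGx : S.G x ∈ S.Lam j := by
        refine ⟨S.hGmaps hx01, ?_⟩
        intro i hi
        have hGi : S.G^[i] (S.G x) = S.G^[i + 1] x := by
          rw [← Function.iterate_succ_apply]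
        rw [hGi]
        by_cases hcase : i + 1 < j - 1
        · exact hxL.2 (i + 1) hcase
        · push_neg at hcase
          have hik : k ≤ i + 1 := le_trans (hk.2.trans hq2) hcase
          have heq : S.G^[i + 1 - k] (S.G^[k] x) = S.G^[i + 1] x := by
            rw [← Function.iterate_add_apply]
            congr 1
            omega
          rw [← heq]
          exact hkL.2 _ (by omega)
      exact h1.2 (hU1 hGx)
end
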